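/- Let P₁, P₂ be non-commutative Poisson algebras of the same class with finite discrete degree maps, z₁ ∈ P₁, z₂ ∈ P₂, Γ = z₁⊗1 + 1⊗z₂. Suppose F(z₁) = N(z₁) and F(z₂) = D(z₂). Then F(Γ) = N(z₁) ⊗ D(z₂), N(Γ) = N(z₁) ⊗ C(z₂), D(Γ) = C(z₁) ⊗ D(z₂), and C(Γ) = C(z₁) ⊗ C(z₂). If moreover C(z₁) ⊊ N(z₁) and C(z₂) ⊊ D(z₂), then C(Γ) ⊊ N(Γ), C(Γ) ⊊ D(Γ), D(Γ) ⊊ F(Γ), so Γ is of Jordan type. -/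

import Mathlib

set_option linter.unusedSectionVars false
set_option maxHeartbeats 1000000


open scoped TensorProduct

/-- A (possibly non-commutative) Poisson algebra structure on an associative
unital `K`-algebra `P`: a `K`-bilinear Lie bracket satisfying the Leibniz rule. -/
structure PoissonBracket (K P : Type*) [CommRing K] [Ring P] [Algebra K P] where
  bracket : P →ₗ[K] P →ₗ[K] P
  antisymm : ∀ x y : P, bracket x y = - bracket y x
  jacobi : ∀ x y z : P,
    bracket x (bracket y z) = bracket (bracket x y) z + bracket y (bracket x z)
  leibniz : ∀ x y z : P, bracket x (y * z) = bracket x y * z + y * bracket x z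

/-- A finite discrete degree map on a non-commutative Poisson algebra `P`:
`deg(zw) = deg z + deg w ≥ deg {z,w}`, `deg (z+w) ≤ max`, `deg z = ⊥ ↔ z = 0`,
nonzero elements have nonnegative degree (discreteness), and each filtration
piece `{a | deg a ≤ t}` is a finite-dimensional subspace (finiteness). -/
structure DegreeMap (K P : Type*) [Field K] [Ring P] [Algebra K P]
    (B : PoissonBracket K P) where
  deg : P → WithBot ℤ
  deg_mul : ∀ z w : P, deg (z * w) = deg z + deg w
  deg_bracket : ∀ z w : P, deg (B.bracket z w) ≤ deg z + deg w
  deg_add : ∀ z w : P, deg (z + w) ≤ max (deg z) (deg w)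
  deg_bot : ∀ z : P, deg z = ⊥ ↔ z = 0
  discrete : ∀ z : P, z ≠ 0 → 0 ≤ deg z
  finite : ∀ t : ℤ, ∃ V : Submodule K P,
    (V : Set P) = {a : P | deg a ≤ (t : WithBot ℤ)} ∧ FiniteDimensional K V

namespace Stmt19Aux

open Submodule LinearMap Set

variable {K : Type*} [Field K]
variable {M : Type*} [AddCommGroup M] [Module K M]
variable {N : Type*} [AddCommGroup N] [Module K N]

/-- The locally finite part of an endomorphism, as a submodule. -/
noncomputable def fSub (L : Module.End K M) : Submodule K M where
  carrier := {x | FiniteDimensional K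
    ↥(Submodule.span K (Set.range fun n : ℕ => (L ^ n) x))}
  zero_mem' := by
    have h : Submodule.span K (Set.range fun n : ℕ => (L ^ n) (0 : M)) ≤
        Submodule.span K ({0} : Set M) := by
      apply Submodule.span_mono; rintro y ⟨n, rfl⟩; simp
    haveI : FiniteDimensional K ↥(Submodule.span K ({0} : Set M)) :=
      FiniteDimensional.span_of_finite K (Set.finite_singleton 0)
    exact Submodule.finiteDimensional_of_le h
  add_mem' := by
    intro x y hx hy
    haveI : FiniteDimensional K
        ↥(Submodule.span K (Set.range fun n : ℕ => (L ^ n) x)) := hx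
    haveI : FiniteDimensional K
        ↥(Submodule.span K (Set.range fun n : ℕ => (L ^ n) y)) := hy
    have h : Submodule.span K (Set.range fun n : ℕ => (L ^ n) (x + y)) ≤
        Submodule.span K (Set.range fun n : ℕ => (L ^ n) x) ⊔
        Submodule.span K (Set.range fun n : ℕ => (L ^ n) y) := by
      rw [Submodule.span_le]; rintro z ⟨n, rfl⟩
      show (L ^ n) (x + y) ∈ _
      rw [map_add]
      exact Submodule.add_mem _
        (Submodule.mem_sup_left (Submodule.subset_span ⟨n, rfl⟩))
        (Submodule.mem_sup_right (Submodule.subset_span ⟨n, rfl⟩))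
    exact Submodule.finiteDimensional_of_le h
  smul_mem' := by
    intro c x hx
    haveI : FiniteDimensional K
        ↥(Submodule.span K (Set.range fun n : ℕ => (L ^ n) x)) := hx
    have h : Submodule.span K (Set.range fun n : ℕ => (L ^ n) (c • x)) ≤
        Submodule.span K (Set.range fun n : ℕ => (L ^ n) x) := by
      rw [Submodule.span_le]; rintro z ⟨n, rfl⟩
      show (L ^ n) (c • x) ∈ _
      rw [map_smul]
      exact Submodule.smul_mem _ _ (Submodule.subset_span ⟨n, rfl⟩)
    exact Submodule.finiteDimensional_of_le h

lemma mem_fSub_iff {L : Module.End K M} {x : M} :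
    x ∈ fSub L ↔ FiniteDimensional K
      ↥(Submodule.span K (Set.range fun n : ℕ => (L ^ n) x)) := Iff.rfl

lemma coe_fSub (L : Module.End K M) :
    (fSub L : Set M) = {x | FiniteDimensional K
      ↥(Submodule.span K (Set.range fun n : ℕ => (L ^ n) x))} := rfl

lemma mem_fSub_of_invariant {L : Module.End K M} {W : Submodule K M}
    (hfd : FiniteDimensional K W) (hW : ∀ y ∈ W, L y ∈ W) {x : M} (hx : x ∈ W) :
    x ∈ fSub L := by
  have h : Submodule.span K (Set.range fun n : ℕ => (L ^ n) x) ≤ W := by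
    rw [Submodule.span_le]; rintro z ⟨n, rfl⟩
    show (L ^ n) x ∈ _
    induction n with
    | zero => simpa using hx
    | succ n ih =>
      have : (L ^ (n + 1)) x = L ((L ^ n) x) := by
        rw [pow_succ']; rfl
      rw [this]; exact hW _ ih
  exact Submodule.finiteDimensional_of_le h

/-- The locally nilpotent part of an endomorphism, as a submodule. -/
def nSub (L : Module.End K M) : Submodule K M where
  carrier := {x | ∃ m : ℕ, (L ^ m) x = 0}
  zero_mem' := ⟨0, by simp⟩
  add_mem' := by
    rintro x y ⟨m, hm⟩ ⟨k, hk⟩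
    refine ⟨m + k, ?_⟩
    have h1 : (L ^ (m + k)) x = (L ^ k) ((L ^ m) x) := by
      rw [add_comm, pow_add]; rfl
    have h2 : (L ^ (m + k)) y = (L ^ m) ((L ^ k) y) := by
      rw [pow_add]; rfl
    rw [map_add, h1, h2, hm, hk, map_zero, map_zero, add_zero]
  smul_mem' := by
    rintro c x ⟨m, hm⟩
    exact ⟨m, by rw [map_smul, hm, smul_zero]⟩

lemma mem_nSub_iff {L : Module.End K M} {x : M} :
    x ∈ nSub L ↔ ∃ m : ℕ, (L ^ m) x = 0 := Iff.rfl

lemma pow_apply_eq_zero_of_le {L : Module.End K M} {x : M} {m n : ℕ}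
    (h : m ≤ n) (hm : (L ^ m) x = 0) : (L ^ n) x = 0 := by
  obtain ⟨k, rfl⟩ := Nat.exists_eq_add_of_le h
  rw [add_comm, pow_add, Module.End.mul_apply, hm, map_zero]

/-- Kernel-of-power + invertible-translate forces vanishing. -/
lemma nilp_translate {L : Module.End K M} {mu : K} (hmu : mu ≠ 0) :
    ∀ (n : ℕ) (x : M) (m : ℕ), (L ^ n) x = 0 → ((L + mu • 1) ^ m) x = 0 → x = 0 := by
  have hcomm : Commute L (L + mu • (1 : Module.End K M)) := by
    apply Commute.add_right (Commute.refl L)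
    exact Commute.smul_right (Commute.one_right L) mu
  have hker : ∀ (m : ℕ) (x : M), L x = 0 → ((L + mu • 1) ^ m) x = mu ^ m • x := by
    intro m
    induction m with
    | zero => intro x _; simp
    | succ m ih =>
      intro x hx
      rw [pow_succ, Module.End.mul_apply]
      have : (L + mu • (1 : Module.End K M)) x = mu • x := by
        simp [LinearMap.add_apply, hx]
      rw [this, map_smul, ih x hx, pow_succ, smul_smul, mul_comm]
  intro n
  induction n with
  | zero => intro x m hx _; simpa using hx
  | succ n ih =>
    intro x m hx hx2
    have hLx : L x = 0 := by
      apply ih (L x) m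
      · have : (L ^ n) (L x) = (L ^ (n + 1)) x := by rw [pow_succ]; rfl
        rw [this, hx]
      · have : ((L + mu • 1) ^ m) (L x) = L (((L + mu • 1) ^ m) x) := by
          have := (hcomm.pow_right m).symm
          calc ((L + mu • 1) ^ m) (L x) = (((L + mu • 1) ^ m) * L) x := rfl
            _ = (L * ((L + mu • 1) ^ m)) x := by rw [← this]
            _ = L (((L + mu • 1) ^ m) x) := rfl
        rw [this, hx2, map_zero]
    have := hker m x hLx
    rw [hx2] at this
    have hmu' : mu ^ m ≠ 0 := pow_ne_zero _ hmu
    rcases smul_eq_zero.mp this.symm with h | h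
    · exact absurd h hmu'
    · exact h

/-- From an independent family, a finsupp decomposition of `0` has all components `0`. -/
lemma indep_components_eq_zero {ι : Type*} {p : ι → Submodule K M} (hp : iSupIndep p)
    (f : ι →₀ M) (hf : ∀ i, f i ∈ p i) (hsum : (f.sum fun _ x => x) = 0) :
    ∀ i, f i = 0 := by
  classical
  intro i
  by_cases hi : i ∈ f.support
  · have hdis := iSupIndep_def.mp hp i
    have hsplit : f i + ∑ j ∈ f.support.erase i, f j = 0 := by
      rw [Finset.add_sum_erase _ _ hi]
      exact hsum
    have heq : f i = -∑ j ∈ f.support.erase i, f j :=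
      eq_neg_of_add_eq_zero_left hsplit
    have hmem2 : f i ∈ ⨆ (j) (_ : j ≠ i), p j := by
      rw [heq]
      refine neg_mem (Submodule.sum_mem _ fun j hj => ?_)
      have hji : j ≠ i := (Finset.mem_erase.mp hj).1
      exact Submodule.mem_iSup_of_mem j (Submodule.mem_iSup_of_mem hji (hf j))
    exact Submodule.disjoint_def.mp hdis (f i) (hf i) hmem2
  · simpa [Finsupp.mem_support_iff, not_not] using hi

section Coord

variable {ι : Type*} (b : Module.Basis ι K M)
variable {κ : Type*} (c : Module.Basis κ K N)

/-- Coordinates of a tensor with respect to a basis of the left factor. -/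
noncomputable def coordL : (M ⊗[K] N) ≃ₗ[K] (ι →₀ N) :=
  letI := Classical.decEq ι
  (TensorProduct.congr b.repr (LinearEquiv.refl K N)).trans
    (TensorProduct.finsuppScalarLeft K N ι)

@[simp] lemma coordL_tmul (v : M) (w : N) (i : ι) :
    coordL b (v ⊗ₜ[K] w) i = b.repr v i • w := by
  simp [coordL]

lemma coordL_single (i : ι) (w : N) :
    coordL b (b i ⊗ₜ[K] w) = Finsupp.single i w := by
  ext j
  rw [coordL_tmul, Module.Basis.repr_self]
  by_cases h : i = j
  · subst h; simp
  · simp [Finsupp.single_apply, h, Ne.symm h]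

lemma coordL_repr_sum (T : M ⊗[K] N) :
    ((coordL b T).sum fun i w => b i ⊗ₜ[K] w) = T := by
  apply (coordL b).injective
  rw [map_finsuppSum]
  simp_rw [coordL_single]
  exact Finsupp.sum_single _

lemma coordL_lTensor (Dm : Module.End K N) (T : M ⊗[K] N) (i : ι) :
    coordL b (LinearMap.lTensor M Dm T) i = Dm (coordL b T i) := by
  induction T with
  | zero => simp
  | tmul v w => simp
  | add x y hx hy => simp [hx, hy]

lemma coordL_rTensor_mem (Am : Module.End K M) (T : M ⊗[K] N) (i : ι) :
    coordL b (LinearMap.rTensor N Am T) i ∈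
      Submodule.span K (Set.range (coordL b T)) := by
  have hTT : LinearMap.rTensor N Am T =
      (coordL b T).sum fun j w => Am (b j) ⊗ₜ[K] w := by
    nth_rewrite 1 [← coordL_repr_sum b T]
    rw [map_finsuppSum]
    simp only [LinearMap.rTensor_tmul]
  rw [hTT, map_finsuppSum, Finsupp.sum_apply]
  refine Submodule.sum_mem _ fun j hj => ?_
  show coordL b (Am (b j) ⊗ₜ[K] (coordL b T) j) i ∈ _
  rw [coordL_tmul]
  exact Submodule.smul_mem _ _ (Submodule.subset_span ⟨j, rfl⟩)

/-- Coordinates of a tensor with respect to a basis of the right factor. -/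
noncomputable def coordR : (M ⊗[K] N) ≃ₗ[K] (κ →₀ M) :=
  letI := Classical.decEq κ
  (TensorProduct.congr (LinearEquiv.refl K M) c.repr).trans
    (TensorProduct.finsuppScalarRight K K M κ)

@[simp] lemma coordR_tmul (v : M) (w : N) (j : κ) :
    coordR c (v ⊗ₜ[K] w) j = c.repr w j • v := by
  simp [coordR]

lemma coordR_single (j : κ) (v : M) :
    coordR c (v ⊗ₜ[K] c j) = Finsupp.single j v := by
  ext j'
  rw [coordR_tmul, Module.Basis.repr_self]
  by_cases h : j = j'
  · subst h; simp
  · simp [Finsupp.single_apply, h, Ne.symm h]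

lemma coordR_repr_sum (T : M ⊗[K] N) :
    ((coordR c T).sum fun j v => v ⊗ₜ[K] c j) = T := by
  apply (coordR c).injective
  rw [map_finsuppSum]
  simp_rw [coordR_single]
  exact Finsupp.sum_single _

lemma coordR_rTensor (Am : Module.End K M) (T : M ⊗[K] N) (j : κ) :
    coordR c (LinearMap.rTensor N Am T) j = Am (coordR c T j) := by
  induction T with
  | zero => simp
  | tmul v w => simp
  | add x y hx hy => simp [hx, hy]

lemma coordR_lTensor_mem (Dm : Module.End K N) (T : M ⊗[K] N) (j : κ) :
    coordR c (LinearMap.lTensor M Dm T) j ∈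
      Submodule.span K (Set.range (coordR c T)) := by
  have hTT : LinearMap.lTensor M Dm T =
      (coordR c T).sum fun j' v => v ⊗ₜ[K] Dm (c j') := by
    nth_rewrite 1 [← coordR_repr_sum c T]
    rw [map_finsuppSum]
    simp only [LinearMap.lTensor_tmul]
  rw [hTT, map_finsuppSum, Finsupp.sum_apply]
  refine Submodule.sum_mem _ fun j' hj' => ?_
  show coordR c ((coordR c T) j' ⊗ₜ[K] Dm (c j')) j ∈ _
  rw [coordR_tmul]
  exact Submodule.smul_mem _ _ (Submodule.subset_span ⟨j', rfl⟩)

lemma finsupp_range_finite (f : ι →₀ N) : (Set.range ⇑f).Finite := by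
  classical
  apply Set.Finite.subset (Set.Finite.insert 0 (f.support.finite_toSet.image ⇑f))
  rintro y ⟨i, rfl⟩
  by_cases hi : i ∈ f.support
  · exact Set.mem_insert_of_mem _ ⟨i, hi, rfl⟩
  · rw [Finsupp.notMem_support_iff.mp hi]
    exact Set.mem_insert _ _

end Coord

/-- Combination lemma: if all right components (w.r.t. a basis of `M`) lie in `S₂`
and all left components (w.r.t. every basis of `N`) lie in `S₁`, then `T` lies in
the span of pure tensors from `S₁` and `S₂`. -/
lemma comb {ι : Type*} (b : Module.Basis ι K M) {S₁ : Submodule K M} {S₂ : Submodule K N}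
    {T : M ⊗[K] N}
    (hR : ∀ i, coordL b T i ∈ S₂)
    (hL : ∀ (s' : Set N) (c : Module.Basis s' K N) (j : s'), coordR c T j ∈ S₁) :
    T ∈ Submodule.span K {x : M ⊗[K] N | ∃ v w, v ∈ S₁ ∧ w ∈ S₂ ∧ x = v ⊗ₜ[K] w} := by
  classical
  obtain ⟨s, hsub, hspan, hli⟩ := exists_linearIndependent K (Set.range (coordL b T))
  replace hli : LinearIndepOn K id s := hli
  set c : Module.Basis (hli.extend (Set.subset_univ s)) K N := Module.Basis.extend hli with hc
  have key0 : ∀ w ∈ Submodule.span K s, ∀ j : hli.extend (Set.subset_univ s),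
      (j : N) ∉ s → c.repr w j = 0 := by
    intro w hw
    induction hw using Submodule.span_induction with
    | mem w hw =>
      intro j hj
      have hwex : w ∈ hli.extend (Set.subset_univ s) := hli.subset_extend _ hw
      have : w = c ⟨w, hwex⟩ := (Module.Basis.extend_apply_self hli ⟨w, hwex⟩).symm
      rw [this, Module.Basis.repr_self, Finsupp.single_apply]
      have hne : (⟨w, hwex⟩ : hli.extend (Set.subset_univ s)) ≠ j := by
        intro hEq
        apply hj
        rw [← hEq]
        exact hw
      simp [hne]
    | zero => intro j _; simp
    | add x y _ _ hx hy => intro j hj; rw [map_add, Finsupp.add_apply, hx j hj, hy j hj, add_zero]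
    | smul a x _ hx => intro j hj; rw [map_smul, Finsupp.smul_apply, hx j hj, smul_zero]
  have key1 : T ∈ Submodule.span K
      {x : M ⊗[K] N | ∃ v w, w ∈ Submodule.span K s ∧ x = v ⊗ₜ[K] w} := by
    rw [← coordL_repr_sum b T]
    refine Submodule.sum_mem _ fun i hi => ?_
    refine Submodule.subset_span ⟨b i, coordL b T i, ?_, rfl⟩
    rw [hspan]
    exact Submodule.subset_span ⟨i, rfl⟩
  have key2 : ∀ j : hli.extend (Set.subset_univ s), (j : N) ∉ s → coordR c T j = 0 := by
    intro j hj
    have hker : Submodule.span K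
        {x : M ⊗[K] N | ∃ v w, w ∈ Submodule.span K s ∧ x = v ⊗ₜ[K] w} ≤
        LinearMap.ker ((Finsupp.lapply j) ∘ₗ (coordR c).toLinearMap) := by
      rw [Submodule.span_le]
      rintro x ⟨v, w, hw, rfl⟩
      simp only [SetLike.mem_coe, LinearMap.mem_ker, LinearMap.comp_apply,
        Finsupp.lapply_apply, LinearEquiv.coe_coe, coordR_tmul]
      rw [key0 w hw j hj, zero_smul]
    exact hker key1
  rw [← coordR_repr_sum c T]
  refine Submodule.sum_mem _ fun j hj => ?_
  have hjs : (j : N) ∈ s := by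
    by_contra hns
    rw [Finsupp.mem_support_iff] at hj
    exact hj (key2 j hns)
  refine Submodule.subset_span ⟨coordR c T j, c j, hL _ c j, ?_, rfl⟩
  rw [Module.Basis.extend_apply_self]
  obtain ⟨i, hi⟩ := hsub hjs
  rw [← hi]
  exact hR i

/-- Key induction: right-hand components of a generalized eigenvector of
`A ⊗ 1 + 1 ⊗ D` are locally finite for `D`. -/
lemma core_right {ι : Type*} (b : Module.Basis ι K M) (A : Module.End K M) (D : Module.End K N)
    (lam : K) :
    ∀ (m : ℕ) (T : M ⊗[K] N),
      (((LinearMap.rTensor N A + LinearMap.lTensor M D - lam • 1) :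
        Module.End K (M ⊗[K] N)) ^ m) T = 0 →
      ∀ i, coordL b T i ∈ fSub D := by
  classical
  set g : Module.End K (M ⊗[K] N) :=
    LinearMap.rTensor N A + LinearMap.lTensor M D - lam • 1 with hg
  intro m
  induction m with
  | zero =>
    intro T hT i
    rw [pow_zero] at hT
    have hT0 : T = 0 := hT
    rw [hT0, map_zero]
    simp only [Finsupp.coe_zero, Pi.zero_apply]
    exact Submodule.zero_mem _
  | succ m ih =>
    intro T hT i
    have h1 : (g ^ m) (g T) = 0 := by
      rw [pow_succ] at hT
      exact hT
    have hcomp := ih (g T) h1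
    have hrel : ∀ i', D (coordL b T i') =
        coordL b (g T) i' + lam • coordL b T i'
          - coordL b (LinearMap.rTensor N A T) i' := by
      intro i'
      have hgT : g T = LinearMap.rTensor N A T + LinearMap.lTensor M D T - lam • T := by
        simp [hg, LinearMap.sub_apply, LinearMap.add_apply, LinearMap.smul_apply]
      rw [hgT, map_sub, map_add, map_smul]
      simp only [Finsupp.coe_add, Finsupp.coe_smul, Pi.add_apply, Pi.smul_apply,
        Finsupp.coe_sub, Pi.sub_apply]
      rw [coordL_lTensor]
      abel
    set S1 : Set N :=
      ⋃ i' : ((coordL b (g T)).support : Set ι),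
        Set.range (fun n : ℕ => (D ^ n) (coordL b (g T) (i' : ι))) with hS1
    set W0 : Submodule K N := Submodule.span K (Set.range (coordL b T)) with hW0
    set W1 : Submodule K N := Submodule.span K S1 with hW1
    haveI hfd0 : FiniteDimensional K W0 :=
      FiniteDimensional.span_of_finite K (finsupp_range_finite _)
    haveI hfd1 : FiniteDimensional K W1 := by
      rw [hW1, hS1, Submodule.span_iUnion]
      haveI : ∀ i' : ((coordL b (g T)).support : Set ι),
          FiniteDimensional K (Submodule.span K
            (Set.range (fun n : ℕ => (D ^ n) (coordL b (g T) (i' : ι))))) :=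
        fun i' => hcomp (i' : ι)
      infer_instance
    have hgT_mem : ∀ i', coordL b (g T) i' ∈ W1 := by
      intro i'
      by_cases hi' : i' ∈ (coordL b (g T)).support
      · apply Submodule.subset_span
        apply Set.mem_iUnion.mpr
        exact ⟨⟨i', hi'⟩, ⟨0, by simp⟩⟩
      · rw [Finsupp.notMem_support_iff.mp hi']
        exact Submodule.zero_mem _
    have hstab : ∀ y ∈ W0 ⊔ W1, D y ∈ W0 ⊔ W1 := by
      have hmap : Submodule.map D (W0 ⊔ W1) ≤ W0 ⊔ W1 := by
        rw [Submodule.map_sup]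
        apply sup_le
        · rw [hW0, Submodule.map_span, Submodule.span_le]
          rintro y ⟨y', ⟨i', rfl⟩, rfl⟩
          show D (coordL b T i') ∈ _
          rw [hrel i']
          refine Submodule.sub_mem _ (Submodule.add_mem _ ?_ ?_) ?_
          · exact Submodule.mem_sup_right (hgT_mem i')
          · exact Submodule.mem_sup_left
              (Submodule.smul_mem _ _ (Submodule.subset_span ⟨i', rfl⟩))
          · exact Submodule.mem_sup_left (coordL_rTensor_mem b A T i')
        · rw [hW1, Submodule.map_span, Submodule.span_le]
          rintro y ⟨y', hy', rfl⟩
          apply Submodule.mem_sup_right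
          apply Submodule.subset_span
          rw [hS1] at hy'
          obtain ⟨i', ⟨n, rfl⟩⟩ := Set.mem_iUnion.mp hy'
          apply Set.mem_iUnion.mpr
          refine ⟨i', ⟨n + 1, ?_⟩⟩
          show (D ^ (n + 1)) _ = D ((D ^ n) _)
          rw [pow_succ']
          rfl
      intro y hy
      exact hmap (Submodule.mem_map_of_mem hy)
    exact mem_fSub_of_invariant (Submodule.finiteDimensional_sup W0 W1) hstab
      (Submodule.mem_sup_left (Submodule.subset_span ⟨i, rfl⟩))

/-- Mirror of `core_right`. -/
lemma core_left {κ : Type*} (c : Module.Basis κ K N) (A : Module.End K M) (D : Module.End K N)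
    (lam : K) :
    ∀ (m : ℕ) (T : M ⊗[K] N),
      (((LinearMap.rTensor N A + LinearMap.lTensor M D - lam • 1) :
        Module.End K (M ⊗[K] N)) ^ m) T = 0 →
      ∀ j, coordR c T j ∈ fSub A := by
  classical
  set g : Module.End K (M ⊗[K] N) :=
    LinearMap.rTensor N A + LinearMap.lTensor M D - lam • 1 with hg
  intro m
  induction m with
  | zero =>
    intro T hT j
    rw [pow_zero] at hT
    have hT0 : T = 0 := hT
    rw [hT0, map_zero]
    simp only [Finsupp.coe_zero, Pi.zero_apply]
    exact Submodule.zero_mem _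
  | succ m ih =>
    intro T hT j
    have h1 : (g ^ m) (g T) = 0 := by
      rw [pow_succ] at hT
      exact hT
    have hcomp := ih (g T) h1
    have hrel : ∀ j', A (coordR c T j') =
        coordR c (g T) j' + lam • coordR c T j'
          - coordR c (LinearMap.lTensor M D T) j' := by
      intro j'
      have hgT : g T = LinearMap.lTensor M D T + LinearMap.rTensor N A T - lam • T := by
        simp [hg, LinearMap.sub_apply, LinearMap.add_apply, LinearMap.smul_apply]
        abel
      rw [hgT, map_sub, map_add, map_smul]
      simp only [Finsupp.coe_add, Finsupp.coe_smul, Pi.add_apply, Pi.smul_apply,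
        Finsupp.coe_sub, Pi.sub_apply]
      rw [coordR_rTensor]
      abel
    set S1 : Set M :=
      ⋃ j' : ((coordR c (g T)).support : Set κ),
        Set.range (fun n : ℕ => (A ^ n) (coordR c (g T) (j' : κ))) with hS1
    set W0 : Submodule K M := Submodule.span K (Set.range (coordR c T)) with hW0
    set W1 : Submodule K M := Submodule.span K S1 with hW1
    haveI hfd0 : FiniteDimensional K W0 :=
      FiniteDimensional.span_of_finite K (finsupp_range_finite _)
    haveI hfd1 : FiniteDimensional K W1 := by
      rw [hW1, hS1, Submodule.span_iUnion]
      haveI : ∀ j' : ((coordR c (g T)).support : Set κ),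
          FiniteDimensional K (Submodule.span K
            (Set.range (fun n : ℕ => (A ^ n) (coordR c (g T) (j' : κ))))) :=
        fun j' => hcomp (j' : κ)
      infer_instance
    have hgT_mem : ∀ j', coordR c (g T) j' ∈ W1 := by
      intro j'
      by_cases hj' : j' ∈ (coordR c (g T)).support
      · apply Submodule.subset_span
        apply Set.mem_iUnion.mpr
        exact ⟨⟨j', hj'⟩, ⟨0, by simp⟩⟩
      · rw [Finsupp.notMem_support_iff.mp hj']
        exact Submodule.zero_mem _
    have hstab : ∀ y ∈ W0 ⊔ W1, A y ∈ W0 ⊔ W1 := by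
      have hmap : Submodule.map A (W0 ⊔ W1) ≤ W0 ⊔ W1 := by
        rw [Submodule.map_sup]
        apply sup_le
        · rw [hW0, Submodule.map_span, Submodule.span_le]
          rintro y ⟨y', ⟨j', rfl⟩, rfl⟩
          show A (coordR c T j') ∈ _
          rw [hrel j']
          refine Submodule.sub_mem _ (Submodule.add_mem _ ?_ ?_) ?_
          · exact Submodule.mem_sup_right (hgT_mem j')
          · exact Submodule.mem_sup_left
              (Submodule.smul_mem _ _ (Submodule.subset_span ⟨j', rfl⟩))
          · exact Submodule.mem_sup_left (coordR_lTensor_mem c D T j')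
        · rw [hW1, Submodule.map_span, Submodule.span_le]
          rintro y ⟨y', hy', rfl⟩
          apply Submodule.mem_sup_right
          apply Submodule.subset_span
          rw [hS1] at hy'
          obtain ⟨j', ⟨n, rfl⟩⟩ := Set.mem_iUnion.mp hy'
          apply Set.mem_iUnion.mpr
          refine ⟨j', ⟨n + 1, ?_⟩⟩
          show (A ^ (n + 1)) _ = A ((A ^ n) _)
          rw [pow_succ']
          rfl
      intro y hy
      exact hmap (Submodule.mem_map_of_mem hy)
    exact mem_fSub_of_invariant (Submodule.finiteDimensional_sup W0 W1) hstab
      (Submodule.mem_sup_left (Submodule.subset_span ⟨j, rfl⟩))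

section Main

open LinearMap

variable (A : Module.End K M) (D : Module.End K N)

/-- The operator `A ⊗ 1 + 1 ⊗ D`. -/
noncomputable def bigG : Module.End K (M ⊗[K] N) :=
  LinearMap.rTensor N A + LinearMap.lTensor M D

lemma bigG_tmul (v : M) (w : N) :
    bigG A D (v ⊗ₜ[K] w) = A v ⊗ₜ[K] w + v ⊗ₜ[K] D w := by
  simp [bigG]

lemma commAD : (LinearMap.lTensor M D) * (LinearMap.rTensor N A)
    = (LinearMap.rTensor N A) * (LinearMap.lTensor M D) := by
  show (LinearMap.lTensor M D) ∘ₗ (LinearMap.rTensor N A)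
    = (LinearMap.rTensor N A) ∘ₗ (LinearMap.lTensor M D)
  rw [LinearMap.lTensor_comp_rTensor, LinearMap.rTensor_comp_lTensor]

lemma rTensor_pow_tmul (n : ℕ) (v : M) (w : N) :
    ((LinearMap.rTensor N A) ^ n) (v ⊗ₜ[K] w) = ((A ^ n) v) ⊗ₜ[K] w := by
  rw [LinearMap.rTensor_pow, LinearMap.rTensor_tmul]

/-- The span of eigenvectors of `D`. -/
noncomputable def eigSpan : Submodule K N :=
  Submodule.span K {x : N | ∃ mu : K, D x = mu • x}

/-- generalized product pieces -/
noncomputable def pMu (mu : K) : Submodule K (M ⊗[K] N) :=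
  Submodule.span K {T : M ⊗[K] N | ∃ v w,
    (∃ m : ℕ, (A ^ m) v = 0) ∧ D w = mu • w ∧ T = v ⊗ₜ[K] w}

lemma pMu_le_eig (mu : K) :
    pMu A D mu ≤ Module.End.eigenspace (LinearMap.lTensor M D) mu := by
  rw [pMu, Submodule.span_le]
  rintro T ⟨v, w, _, hw, rfl⟩
  rw [SetLike.mem_coe, Module.End.mem_eigenspace_iff, LinearMap.lTensor_tmul, hw,
    TensorProduct.tmul_smul]

lemma pMu_nilp (mu : K) {T : M ⊗[K] N} (hT : T ∈ pMu A D mu) :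
    ∃ n : ℕ, ((LinearMap.rTensor N A) ^ n) T = 0 := by
  induction hT using Submodule.span_induction with
  | mem T hT =>
    obtain ⟨v, w, ⟨m, hm⟩, _, rfl⟩ := hT
    exact ⟨m, by rw [rTensor_pow_tmul, hm, TensorProduct.zero_tmul]⟩
  | zero => exact ⟨0, by simp⟩
  | add x y _ _ hx hy =>
    obtain ⟨n₁, h₁⟩ := hx
    obtain ⟨n₂, h₂⟩ := hy
    refine ⟨n₁ + n₂, ?_⟩
    rw [map_add, pow_apply_eq_zero_of_le (Nat.le_add_right n₁ n₂) h₁,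
      pow_apply_eq_zero_of_le (Nat.le_add_left n₂ n₁) h₂, add_zero]
  | smul a x _ hx =>
    obtain ⟨n₁, h₁⟩ := hx
    exact ⟨n₁, by rw [map_smul, h₁, smul_zero]⟩

lemma bigG_mem_eig {mu : K} {x : M ⊗[K] N}
    (hx : x ∈ Module.End.eigenspace (LinearMap.lTensor M D) mu) :
    bigG A D x ∈ Module.End.eigenspace (LinearMap.lTensor M D) mu := by
  rw [Module.End.mem_eigenspace_iff] at hx ⊢
  have h : LinearMap.lTensor M D (bigG A D x) = bigG A D (LinearMap.lTensor M D x) := by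
    show ((LinearMap.lTensor M D) * (bigG A D)) x = ((bigG A D) * (LinearMap.lTensor M D)) x
    rw [bigG, mul_add, add_mul, commAD]
  rw [h, hx, map_smul]

lemma smul_mem_eig {mu a : K} {x : M ⊗[K] N}
    (hx : x ∈ Module.End.eigenspace (LinearMap.lTensor M D) mu) :
    a • x ∈ Module.End.eigenspace (LinearMap.lTensor M D) mu :=
  Submodule.smul_mem _ _ hx

lemma eig_lTensor_eq {mu : K} {x : M ⊗[K] N}
    (hx : x ∈ Module.End.eigenspace (LinearMap.lTensor M D) mu) :
    LinearMap.lTensor M D x = mu • x := Module.End.mem_eigenspace_iff.mp hx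

lemma rTensor_mem_eig {mu : K} {x : M ⊗[K] N}
    (hx : x ∈ Module.End.eigenspace (LinearMap.lTensor M D) mu) :
    LinearMap.rTensor N A x ∈ Module.End.eigenspace (LinearMap.lTensor M D) mu := by
  rw [Module.End.mem_eigenspace_iff] at hx ⊢
  have h : LinearMap.lTensor M D (LinearMap.rTensor N A x)
      = LinearMap.rTensor N A (LinearMap.lTensor M D x) := by
    show ((LinearMap.lTensor M D) * (LinearMap.rTensor N A)) x
      = ((LinearMap.rTensor N A) * (LinearMap.lTensor M D)) x
    rw [commAD]
  rw [h, hx, map_smul]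

/-- On an eigenvector of `1 ⊗ D`, `bigG` acts as `A ⊗ 1 + μ`. -/
lemma bigG_pow_on_eig {mu : K} (k : ℕ) {x : M ⊗[K] N}
    (hx : x ∈ Module.End.eigenspace (LinearMap.lTensor M D) mu) :
    ((bigG A D) ^ k) x = (((LinearMap.rTensor N A) + mu • 1) ^ k) x ∧
      (((LinearMap.rTensor N A) + mu • 1) ^ k) x
        ∈ Module.End.eigenspace (LinearMap.lTensor M D) mu := by
  induction k with
  | zero => exact ⟨rfl, by simpa using hx⟩
  | succ k ih =>
    obtain ⟨ih1, ih2⟩ := ih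
    have hPapp : ((LinearMap.rTensor N A + mu • 1 : Module.End K (M ⊗[K] N)))
        ((((LinearMap.rTensor N A) + mu • 1) ^ k) x)
        = LinearMap.rTensor N A ((((LinearMap.rTensor N A) + mu • 1) ^ k) x)
          + mu • ((((LinearMap.rTensor N A) + mu • 1) ^ k) x) := by
      simp [LinearMap.add_apply, LinearMap.smul_apply]
    constructor
    · rw [pow_succ', Module.End.mul_apply, ih1, pow_succ', Module.End.mul_apply, hPapp]
      have hG : bigG A D ((((LinearMap.rTensor N A) + mu • 1) ^ k) x)
          = LinearMap.rTensor N A ((((LinearMap.rTensor N A) + mu • 1) ^ k) x)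
            + LinearMap.lTensor M D ((((LinearMap.rTensor N A) + mu • 1) ^ k) x) := rfl
      rw [hG, eig_lTensor_eq D ih2]
    · rw [pow_succ', Module.End.mul_apply, hPapp]
      exact Submodule.add_mem _ (rTensor_mem_eig A D ih2) (Submodule.smul_mem _ _ ih2)

lemma span_orbit_invariant (L : Module.End K M) (x : M) :
    ∀ y ∈ Submodule.span K (Set.range fun n : ℕ => (L ^ n) x),
      L y ∈ Submodule.span K (Set.range fun n : ℕ => (L ^ n) x) := by
  intro y hy
  have hmap : Submodule.map L (Submodule.span K (Set.range fun n : ℕ => (L ^ n) x))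
      ≤ Submodule.span K (Set.range fun n : ℕ => (L ^ n) x) := by
    rw [Submodule.map_span, Submodule.span_le]
    rintro z ⟨z', ⟨n, rfl⟩, rfl⟩
    apply Submodule.subset_span
    refine ⟨n + 1, ?_⟩
    show (L ^ (n + 1)) x = L ((L ^ n) x)
    rw [pow_succ']
    rfl
  exact hmap (Submodule.mem_map_of_mem hy)

lemma tmul_mem_fSub {v : M} {w : N} (hv : v ∈ fSub A) (hw : w ∈ fSub D) :
    v ⊗ₜ[K] w ∈ fSub (bigG A D) := by
  set W₁ : Submodule K M := Submodule.span K (Set.range fun n : ℕ => (A ^ n) v) with hW₁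
  set W₂ : Submodule K N := Submodule.span K (Set.range fun n : ℕ => (D ^ n) w) with hW₂
  haveI : FiniteDimensional K W₁ := hv
  haveI : FiniteDimensional K W₂ := hw
  set H : Submodule K (M ⊗[K] N) :=
    LinearMap.range (TensorProduct.map W₁.subtype W₂.subtype) with hH
  haveI : FiniteDimensional K H := LinearMap.finiteDimensional_range _
  have hHspan : H = Submodule.span K
      {t : M ⊗[K] N | ∃ (a : W₁) (b : W₂), (a : M) ⊗ₜ[K] (b : N) = t} := by
    rw [hH, TensorProduct.range_map_eq_span_tmul]
    rfl
  have hstabW₁ : ∀ a : W₁, A (a : M) ∈ W₁ := fun a =>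
    span_orbit_invariant A v _ a.2
  have hstabW₂ : ∀ b : W₂, D (b : N) ∈ W₂ := fun b =>
    span_orbit_invariant D w _ b.2
  have hstab : ∀ y ∈ H, bigG A D y ∈ H := by
    have hmap : Submodule.map (bigG A D) H ≤ H := by
      rw [hHspan, Submodule.map_span, Submodule.span_le]
      rintro z ⟨z', ⟨a, b, rfl⟩, rfl⟩
      show bigG A D ((a : M) ⊗ₜ[K] (b : N)) ∈ _
      rw [bigG_tmul]
      refine Submodule.add_mem _ ?_ ?_
      · exact Submodule.subset_span ⟨⟨A a, hstabW₁ a⟩, b, rfl⟩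
      · exact Submodule.subset_span ⟨a, ⟨D b, hstabW₂ b⟩, rfl⟩
    intro y hy
    exact hmap (Submodule.mem_map_of_mem hy)
  have hmem : v ⊗ₜ[K] w ∈ H := by
    rw [hHspan]
    apply Submodule.subset_span
    refine ⟨⟨v, ?_⟩, ⟨w, ?_⟩, rfl⟩
    · exact Submodule.subset_span ⟨0, by simp⟩
    · exact Submodule.subset_span ⟨0, by simp⟩
  exact mem_fSub_of_invariant ‹_› hstab hmem

lemma eig_le_fSub : eigSpan D ≤ fSub D := by
  rw [eigSpan, Submodule.span_le]
  rintro w ⟨mu, hmu⟩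
  have hpow : ∀ n : ℕ, (D ^ n) w = mu ^ n • w := by
    intro n
    induction n with
    | zero => simp
    | succ n ih =>
      have : (D ^ (n + 1)) w = D ((D ^ n) w) := by rw [pow_succ']; rfl
      rw [this, ih, map_smul, hmu, smul_smul, pow_succ, mul_comm]
  have hle : Submodule.span K (Set.range fun n : ℕ => (D ^ n) w)
      ≤ Submodule.span K {w} := by
    rw [Submodule.span_le]
    rintro y ⟨n, rfl⟩
    show (D ^ n) w ∈ _
    rw [hpow n]
    exact Submodule.smul_mem _ _ (Submodule.subset_span rfl)
  haveI : FiniteDimensional K (Submodule.span K ({w} : Set N)) :=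
    FiniteDimensional.span_of_finite K (Set.finite_singleton w)
  exact Submodule.finiteDimensional_of_le hle

variable [IsAlgClosed K]

/-- Main statement (1): `F(Γ) = N(z₁) ⊗ D(z₂)`. -/
lemma main_F (hF1 : fSub A = nSub A) (hF2 : fSub D = eigSpan D) :
    {T : M ⊗[K] N | FiniteDimensional K
        ↥(Submodule.span K (Set.range fun n : ℕ => ((bigG A D) ^ n) T))}
      = ↑(Submodule.span K {T : M ⊗[K] N | ∃ (v : M) (w : N),
          (∃ m : ℕ, (A ^ m) v = 0) ∧
          w ∈ Submodule.span K {x : N | ∃ mu : K, D x = mu • x} ∧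
          T = v ⊗ₜ[K] w}) := by
  apply Set.eq_of_subset_of_subset
  · -- hard direction
    intro T hT
    have hTf : T ∈ fSub (bigG A D) := hT
    set U : Submodule K (M ⊗[K] N) :=
      Submodule.span K (Set.range fun n : ℕ => ((bigG A D) ^ n) T) with hU
    haveI : FiniteDimensional K U := hTf
    have hUstab : ∀ x ∈ U, bigG A D x ∈ U := span_orbit_invariant _ _
    set g : Module.End K U := LinearMap.restrict (bigG A D) hUstab with hgdef
    have hcoe : ∀ (mu : K) (k : ℕ) (x : U),
        ((((g - mu • 1) ^ k) x : U) : M ⊗[K] N)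
          = ((bigG A D - mu • 1) ^ k) (x : M ⊗[K] N) := by
      intro mu k
      induction k with
      | zero => intro x; rfl
      | succ k ih =>
        intro x
        rw [pow_succ, Module.End.mul_apply, pow_succ, Module.End.mul_apply,
          ih ((g - mu • 1) x)]
        congr 1
    have hTU : T ∈ U := Submodule.subset_span ⟨0, by simp⟩
    have htop := Module.End.iSup_maxGenEigenspace_eq_top g
    have hmem : (⟨T, hTU⟩ : U) ∈ ⨆ mu : K, g.maxGenEigenspace mu := by
      rw [htop]; trivial
    have hgoal : ∀ x : U, x ∈ (⨆ mu : K, g.maxGenEigenspace mu) →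
        (x : M ⊗[K] N) ∈ Submodule.span K {T : M ⊗[K] N | ∃ (v : M) (w : N),
          (∃ m : ℕ, (A ^ m) v = 0) ∧
          w ∈ Submodule.span K {x : N | ∃ mu : K, D x = mu • x} ∧
          T = v ⊗ₜ[K] w} := by
      intro x hx
      refine Submodule.iSup_induction (motive := fun y : U =>
        (y : M ⊗[K] N) ∈ Submodule.span K {T : M ⊗[K] N | ∃ (v : M) (w : N),
          (∃ m : ℕ, (A ^ m) v = 0) ∧
          w ∈ Submodule.span K {x : N | ∃ mu : K, D x = mu • x} ∧
          T = v ⊗ₜ[K] w}) (fun mu => g.maxGenEigenspace mu) hx ?_ ?_ ?_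
      · intro mu x hx
        rw [Module.End.mem_maxGenEigenspace] at hx
        obtain ⟨k, hk⟩ := hx
        have hk' : ((bigG A D - mu • 1) ^ k) (x : M ⊗[K] N) = 0 := by
          rw [← hcoe mu k x, hk, Submodule.coe_zero]
        have hk'' : (((LinearMap.rTensor N A + LinearMap.lTensor M D - mu • 1) :
            Module.End K (M ⊗[K] N)) ^ k) (x : M ⊗[K] N) = 0 := hk'
        set b : Module.Basis (Module.Basis.ofVectorSpaceIndex K M) K M := Module.Basis.ofVectorSpace K M
        have hR : ∀ i, coordL b (x : M ⊗[K] N) i ∈ eigSpan D := by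
          intro i
          rw [← hF2]
          exact core_right b A D mu k (x : M ⊗[K] N) hk'' i
        have hL : ∀ (s' : Set N) (c : Module.Basis s' K N) (j : s'),
            coordR c (x : M ⊗[K] N) j ∈ nSub A := by
          intro s' c j
          rw [← hF1]
          exact core_left c A D mu k (x : M ⊗[K] N) hk'' j
        have := comb b hR hL
        refine Submodule.span_mono ?_ this
        rintro t ⟨v, w, hv, hw, rfl⟩
        exact ⟨v, w, hv, hw, rfl⟩
      · simp
      · intro x y hx hy
        rw [Submodule.coe_add]
        exact Submodule.add_mem _ hx hy
    exact hgoal ⟨T, hTU⟩ hmem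
  · -- easy direction
    intro T hT
    have hle : Submodule.span K {T : M ⊗[K] N | ∃ (v : M) (w : N),
        (∃ m : ℕ, (A ^ m) v = 0) ∧
        w ∈ Submodule.span K {x : N | ∃ mu : K, D x = mu • x} ∧
        T = v ⊗ₜ[K] w} ≤ fSub (bigG A D) := by
      rw [Submodule.span_le]
      rintro t ⟨v, w, hv, hw, rfl⟩
      have hv' : v ∈ fSub A := by
        rw [hF1]
        exact hv
      have hw' : w ∈ fSub D := eig_le_fSub D hw
      exact tmul_mem_fSub A D hv' hw'
    exact hle hT

lemma pow_eigvec {L : Module.End K M} {theta : K} {x : M} (h : L x = theta • x) :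
    ∀ k : ℕ, (L ^ k) x = theta ^ k • x := by
  intro k
  induction k with
  | zero => simp
  | succ k ih =>
    have hs : (L ^ (k + 1)) x = L ((L ^ k) x) := by rw [pow_succ']; rfl
    rw [hs, ih, map_smul, h, smul_smul, pow_succ, mul_comm]

lemma bigG_pow_mem_eig {mu : K} (k : ℕ) {x : M ⊗[K] N}
    (hx : x ∈ Module.End.eigenspace (LinearMap.lTensor M D) mu) :
    ((bigG A D) ^ k) x ∈ Module.End.eigenspace (LinearMap.lTensor M D) mu := by
  rw [(bigG_pow_on_eig A D k hx).1]
  exact (bigG_pow_on_eig A D k hx).2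

lemma fSpan_le_iSup_pMu :
    Submodule.span K {T : M ⊗[K] N | ∃ (v : M) (w : N),
      (∃ m : ℕ, (A ^ m) v = 0) ∧
      w ∈ Submodule.span K {x : N | ∃ mu : K, D x = mu • x} ∧
      T = v ⊗ₜ[K] w} ≤ ⨆ mu : K, pMu A D mu := by
  rw [Submodule.span_le]
  rintro T ⟨v, w, hv, hw, rfl⟩
  have hcomap : Submodule.span K {x : N | ∃ mu : K, D x = mu • x} ≤
      (⨆ mu : K, pMu A D mu).comap (TensorProduct.mk K M N v) := by
    rw [Submodule.span_le]
    rintro w' ⟨mu, hmu⟩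
    show v ⊗ₜ[K] w' ∈ ⨆ mu : K, pMu A D mu
    exact Submodule.mem_iSup_of_mem mu (Submodule.subset_span ⟨v, w', hv, hmu, rfl⟩)
  exact hcomap hw

lemma pMu_decomp {T : M ⊗[K] N}
    (hT : T ∈ Submodule.span K {T : M ⊗[K] N | ∃ (v : M) (w : N),
      (∃ m : ℕ, (A ^ m) v = 0) ∧
      w ∈ Submodule.span K {x : N | ∃ mu : K, D x = mu • x} ∧
      T = v ⊗ₜ[K] w}) :
    ∃ f : K →₀ (M ⊗[K] N), (∀ mu, f mu ∈ pMu A D mu) ∧ (f.sum fun _ x => x) = T :=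
  (Submodule.mem_iSup_iff_exists_finsupp _ _).mp (fSpan_le_iSup_pMu A D hT)

/-- Generic component analysis: if `L` is a linear map killing `T` and preserving the
`1 ⊗ D` eigenspaces, then each `pMu`-component of `T` is killed by `L`. -/
lemma component_killed (L : Module.End K (M ⊗[K] N))
    (hL : ∀ mu : K, ∀ x ∈ Module.End.eigenspace (LinearMap.lTensor M D) mu,
      L x ∈ Module.End.eigenspace (LinearMap.lTensor M D) mu)
    {f : K →₀ (M ⊗[K] N)} (hf : ∀ mu, f mu ∈ pMu A D mu)
    (hsum : L (f.sum fun _ x => x) = 0) : ∀ mu, L (f mu) = 0 := by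
  classical
  intro mu
  set f' : K →₀ (M ⊗[K] N) := f.mapRange L (map_zero L) with hf'
  have hf'mem : ∀ mu, f' mu ∈ Module.End.eigenspace (LinearMap.lTensor M D) mu := by
    intro mu
    rw [hf', Finsupp.mapRange_apply]
    exact hL mu _ (pMu_le_eig A D mu (hf mu))
  have hf'sum : (f'.sum fun _ x => x) = 0 := by
    rw [hf', Finsupp.sum_mapRange_index (fun _ => rfl), ← map_finsuppSum, hsum]
  have := indep_components_eq_zero
    (Module.End.eigenspaces_iSupIndep (LinearMap.lTensor M D)) f' hf'mem hf'sum mu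
  rw [hf', Finsupp.mapRange_apply] at this
  exact this

lemma rTensor_eq_bigG_sub {x : M ⊗[K] N} {mu : K}
    (hx : x ∈ Module.End.eigenspace (LinearMap.lTensor M D) mu) :
    LinearMap.rTensor N A x = bigG A D x - mu • x := by
  have : bigG A D x = LinearMap.rTensor N A x + LinearMap.lTensor M D x := rfl
  rw [this, eig_lTensor_eq D hx]
  abel

variable [IsAlgClosed K]

/-- Main statement (4): `C(Γ) = C(z₁) ⊗ C(z₂)`. -/
lemma main_C (hF1 : fSub A = nSub A) (hF2 : fSub D = eigSpan D) :
    {T : M ⊗[K] N | bigG A D T = 0}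
      = ↑(Submodule.span K {T : M ⊗[K] N | ∃ (v : M) (w : N),
          A v = 0 ∧ D w = 0 ∧ T = v ⊗ₜ[K] w}) := by
  apply Set.eq_of_subset_of_subset
  · intro T hT
    have hT0 : bigG A D T = 0 := hT
    have hTF : T ∈ {T : M ⊗[K] N | FiniteDimensional K
        ↥(Submodule.span K (Set.range fun n : ℕ => ((bigG A D) ^ n) T))} := by
      have hle : Submodule.span K (Set.range fun n : ℕ => ((bigG A D) ^ n) T)
          ≤ Submodule.span K ({T} : Set (M ⊗[K] N)) := by
        rw [Submodule.span_le]
        rintro y ⟨n, rfl⟩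
        show ((bigG A D) ^ n) T ∈ _
        cases n with
        | zero => exact Submodule.subset_span (by simp)
        | succ n =>
          have : ((bigG A D) ^ (n + 1)) T = ((bigG A D) ^ n) (bigG A D T) := by
            rw [pow_succ]; rfl
          rw [this, hT0, map_zero]
          exact Submodule.zero_mem _
      haveI : FiniteDimensional K (Submodule.span K ({T} : Set (M ⊗[K] N))) :=
        FiniteDimensional.span_of_finite K (Set.finite_singleton T)
      exact Submodule.finiteDimensional_of_le hle
    rw [main_F A D hF1 hF2] at hTF
    obtain ⟨f, hf, hfsum⟩ := pMu_decomp A D hTF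
    have hkill := component_killed A D (bigG A D)
      (fun mu x hx => bigG_mem_eig A D hx) hf (by rw [hfsum]; exact hT0)
    have hmu_zero : ∀ mu : K, mu ≠ 0 → f mu = 0 := by
      intro mu hmu
      have hA' : LinearMap.rTensor N A (f mu) = (-mu) • f mu := by
        rw [rTensor_eq_bigG_sub A D (pMu_le_eig A D mu (hf mu)), hkill mu, zero_sub, neg_smul]
      obtain ⟨n, hn⟩ := pMu_nilp A D mu (hf mu)
      rw [pow_eigvec hA' n] at hn
      rcases smul_eq_zero.mp hn with h | h
      · exact absurd h (pow_ne_zero _ (neg_ne_zero.mpr hmu))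
      · exact h
    have hzero_comp : f 0 ∈ Submodule.span K {T : M ⊗[K] N | ∃ (v : M) (w : N),
        A v = 0 ∧ D w = 0 ∧ T = v ⊗ₜ[K] w} := by
      have hD0 : LinearMap.lTensor M D (f 0) = 0 := by
        have := eig_lTensor_eq D (pMu_le_eig A D 0 (hf 0))
        rwa [zero_smul] at this
      have hA0 : LinearMap.rTensor N A (f 0) = 0 := by
        rw [rTensor_eq_bigG_sub A D (pMu_le_eig A D 0 (hf 0)), hkill 0, zero_smul, sub_zero]
      set b : Module.Basis (Module.Basis.ofVectorSpaceIndex K M) K M := Module.Basis.ofVectorSpace K M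
      have hR : ∀ i, coordL b (f 0) i ∈ LinearMap.ker D := by
        intro i
        rw [LinearMap.mem_ker, ← coordL_lTensor b D (f 0) i, hD0, map_zero]
        rfl
      have hL : ∀ (s' : Set N) (c : Module.Basis s' K N) (j : s'),
          coordR c (f 0) j ∈ LinearMap.ker A := by
        intro s' c j
        rw [LinearMap.mem_ker, ← coordR_rTensor c A (f 0) j, hA0, map_zero]
        rfl
      have := comb b hR hL
      refine Submodule.span_mono ?_ this
      rintro t ⟨v, w, hv, hw, rfl⟩
      exact ⟨v, w, hv, hw, rfl⟩
    rw [← hfsum]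
    apply Submodule.sum_mem
    intro mu _
    by_cases hmu : mu = 0
    · rw [hmu]; exact hzero_comp
    · rw [hmu_zero mu hmu]; exact Submodule.zero_mem _
  · intro T hT
    have hle : Submodule.span K {T : M ⊗[K] N | ∃ (v : M) (w : N),
        A v = 0 ∧ D w = 0 ∧ T = v ⊗ₜ[K] w} ≤ LinearMap.ker (bigG A D) := by
      rw [Submodule.span_le]
      rintro t ⟨v, w, hv, hw, rfl⟩
      rw [SetLike.mem_coe, LinearMap.mem_ker, bigG_tmul, hv, hw,
        TensorProduct.zero_tmul, TensorProduct.tmul_zero, add_zero]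
    exact hle hT

/-- Main statement (2): `N(Γ) = N(z₁) ⊗ C(z₂)`. -/
lemma main_N (hF1 : fSub A = nSub A) (hF2 : fSub D = eigSpan D) :
    {T : M ⊗[K] N | ∃ m : ℕ, ((bigG A D) ^ m) T = 0}
      = ↑(Submodule.span K {T : M ⊗[K] N | ∃ (v : M) (w : N),
          (∃ m : ℕ, (A ^ m) v = 0) ∧ D w = 0 ∧ T = v ⊗ₜ[K] w}) := by
  have hpMu0 : pMu A D 0 = Submodule.span K {T : M ⊗[K] N | ∃ (v : M) (w : N),
      (∃ m : ℕ, (A ^ m) v = 0) ∧ D w = 0 ∧ T = v ⊗ₜ[K] w} := by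
    rw [pMu]
    congr 1
    ext T
    simp only [Set.mem_setOf_eq, zero_smul]
  apply Set.eq_of_subset_of_subset
  · rintro T ⟨m, hm⟩
    have hTF : T ∈ {T : M ⊗[K] N | FiniteDimensional K
        ↥(Submodule.span K (Set.range fun n : ℕ => ((bigG A D) ^ n) T))} := by
      have hle : Submodule.span K (Set.range fun n : ℕ => ((bigG A D) ^ n) T)
          ≤ Submodule.span K ((fun k : ℕ => ((bigG A D) ^ k) T) '' Set.Iio m) := by
        rw [Submodule.span_le]
        rintro y ⟨n, rfl⟩
        show ((bigG A D) ^ n) T ∈ _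
        by_cases hn : n < m
        · exact Submodule.subset_span ⟨n, hn, rfl⟩
        · rw [pow_apply_eq_zero_of_le (Nat.le_of_not_lt hn) hm]
          exact Submodule.zero_mem _
      haveI : FiniteDimensional K
          (Submodule.span K ((fun k : ℕ => ((bigG A D) ^ k) T) '' Set.Iio m)) :=
        FiniteDimensional.span_of_finite K ((Set.finite_Iio m).image _)
      exact Submodule.finiteDimensional_of_le hle
    rw [main_F A D hF1 hF2] at hTF
    obtain ⟨f, hf, hfsum⟩ := pMu_decomp A D hTF
    have hkill := component_killed A D ((bigG A D) ^ m)
      (fun mu x hx => bigG_pow_mem_eig A D m hx) hf (by rw [hfsum]; exact hm)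
    have hmu_zero : ∀ mu : K, mu ≠ 0 → f mu = 0 := by
      intro mu hmu
      have heig := pMu_le_eig A D mu (hf mu)
      have hGP : (((LinearMap.rTensor N A) + mu • 1) ^ m) (f mu) = 0 := by
        rw [← (bigG_pow_on_eig A D m heig).1]
        exact hkill mu
      obtain ⟨n, hn⟩ := pMu_nilp A D mu (hf mu)
      exact nilp_translate hmu n (f mu) m hn hGP
    rw [← hfsum]
    apply Submodule.sum_mem
    intro mu _
    by_cases hmu : mu = 0
    · rw [hmu, ← hpMu0]
      exact hf 0
    · rw [hmu_zero mu hmu]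
      exact Submodule.zero_mem _
  · intro T hT
    have hle : Submodule.span K {T : M ⊗[K] N | ∃ (v : M) (w : N),
        (∃ m : ℕ, (A ^ m) v = 0) ∧ D w = 0 ∧ T = v ⊗ₜ[K] w} ≤ nSub (bigG A D) := by
      rw [Submodule.span_le]
      rintro t ⟨v, w, ⟨m, hm⟩, hw, rfl⟩
      have hstep : ∀ k : ℕ, ((bigG A D) ^ k) (v ⊗ₜ[K] w) = ((A ^ k) v) ⊗ₜ[K] w := by
        intro k
        induction k with
        | zero => simp
        | succ k ih =>
          have h1 : ((bigG A D) ^ (k + 1)) (v ⊗ₜ[K] w)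
              = bigG A D (((bigG A D) ^ k) (v ⊗ₜ[K] w)) := by rw [pow_succ']; rfl
          have h2 : (A ^ (k + 1)) v = A ((A ^ k) v) := by rw [pow_succ']; rfl
          rw [h1, ih, bigG_tmul, hw, TensorProduct.tmul_zero, add_zero, h2]
      exact ⟨m, by rw [hstep m, hm, TensorProduct.zero_tmul]⟩
    exact hle hT

/-- Main statement (3): `D(Γ) = C(z₁) ⊗ D(z₂)`. -/
lemma main_D (hF1 : fSub A = nSub A) (hF2 : fSub D = eigSpan D) :
    ((Submodule.span K {T : M ⊗[K] N | ∃ lam : K, bigG A D T = lam • T}) :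
        Set (M ⊗[K] N))
      = ↑(Submodule.span K {T : M ⊗[K] N | ∃ (v : M) (w : N),
          A v = 0 ∧
          w ∈ Submodule.span K {x : N | ∃ mu : K, D x = mu • x} ∧
          T = v ⊗ₜ[K] w}) := by
  have hmain : Submodule.span K {T : M ⊗[K] N | ∃ lam : K, bigG A D T = lam • T}
      = Submodule.span K {T : M ⊗[K] N | ∃ (v : M) (w : N),
          A v = 0 ∧
          w ∈ Submodule.span K {x : N | ∃ mu : K, D x = mu • x} ∧
          T = v ⊗ₜ[K] w} := by
    apply le_antisymm
    · rw [Submodule.span_le]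
      rintro T ⟨lam, hT⟩
      show T ∈ Submodule.span K _
      have hTF : T ∈ {T : M ⊗[K] N | FiniteDimensional K
          ↥(Submodule.span K (Set.range fun n : ℕ => ((bigG A D) ^ n) T))} := by
        have hle : Submodule.span K (Set.range fun n : ℕ => ((bigG A D) ^ n) T)
            ≤ Submodule.span K ({T} : Set (M ⊗[K] N)) := by
          rw [Submodule.span_le]
          rintro y ⟨n, rfl⟩
          show ((bigG A D) ^ n) T ∈ _
          rw [pow_eigvec hT n]
          exact Submodule.smul_mem _ _ (Submodule.subset_span rfl)
        haveI : FiniteDimensional K (Submodule.span K ({T} : Set (M ⊗[K] N))) :=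
          FiniteDimensional.span_of_finite K (Set.finite_singleton T)
        exact Submodule.finiteDimensional_of_le hle
      rw [main_F A D hF1 hF2] at hTF
      obtain ⟨f, hf, hfsum⟩ := pMu_decomp A D hTF
      have hkill := component_killed A D (bigG A D - lam • 1)
        (fun mu x hx => Submodule.sub_mem _ (bigG_mem_eig A D hx)
          (Submodule.smul_mem _ _ hx)) hf
        (by
          rw [hfsum]
          rw [LinearMap.sub_apply, LinearMap.smul_apply, Module.End.one_apply, hT, sub_self])
      have hGlam : ∀ mu, bigG A D (f mu) = lam • f mu := by
        intro mu
        have := hkill mu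
        rw [LinearMap.sub_apply, LinearMap.smul_apply, Module.End.one_apply,
          sub_eq_zero] at this
        exact this
      have hmu_ne : ∀ mu : K, mu ≠ lam → f mu = 0 := by
        intro mu hmu
        have heig := pMu_le_eig A D mu (hf mu)
        have hA' : LinearMap.rTensor N A (f mu) = (lam - mu) • f mu := by
          rw [rTensor_eq_bigG_sub A D heig, hGlam mu, sub_smul]
        obtain ⟨n, hn⟩ := pMu_nilp A D mu (hf mu)
        rw [pow_eigvec hA' n] at hn
        rcases smul_eq_zero.mp hn with h | h
        · exact absurd h (pow_ne_zero _ (sub_ne_zero.mpr (Ne.symm hmu)))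
        · exact h
      have hlam_comp : f lam ∈ Submodule.span K {T : M ⊗[K] N | ∃ (v : M) (w : N),
          A v = 0 ∧
          w ∈ Submodule.span K {x : N | ∃ mu : K, D x = mu • x} ∧
          T = v ⊗ₜ[K] w} := by
        have heig := pMu_le_eig A D lam (hf lam)
        have hA0 : LinearMap.rTensor N A (f lam) = 0 := by
          rw [rTensor_eq_bigG_sub A D heig, hGlam lam, sub_self]
        have hDlam : LinearMap.lTensor M D (f lam) = lam • f lam := eig_lTensor_eq D heig
        set b : Module.Basis (Module.Basis.ofVectorSpaceIndex K M) K M := Module.Basis.ofVectorSpace K M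
        have hR : ∀ i, coordL b (f lam) i
            ∈ Submodule.span K {x : N | ∃ mu : K, D x = mu • x} := by
          intro i
          apply Submodule.subset_span
          refine ⟨lam, ?_⟩
          rw [← coordL_lTensor b D (f lam) i, hDlam, map_smul]
          rfl
        have hL : ∀ (s' : Set N) (c : Module.Basis s' K N) (j : s'),
            coordR c (f lam) j ∈ LinearMap.ker A := by
          intro s' c j
          rw [LinearMap.mem_ker, ← coordR_rTensor c A (f lam) j, hA0, map_zero]
          rfl
        have := comb b hR hL
        refine Submodule.span_mono ?_ this
        rintro t ⟨v, w, hv, hw, rfl⟩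
        exact ⟨v, w, hv, hw, rfl⟩
      rw [← hfsum]
      apply Submodule.sum_mem
      intro mu _
      by_cases hmu : mu = lam
      · rw [hmu]; exact hlam_comp
      · rw [hmu_ne mu hmu]; exact Submodule.zero_mem _
    · rw [Submodule.span_le]
      rintro T ⟨v, w, hv, hw, rfl⟩
      have hcomap : Submodule.span K {x : N | ∃ mu : K, D x = mu • x} ≤
          (Submodule.span K {T : M ⊗[K] N | ∃ lam : K, bigG A D T = lam • T}).comap
            (TensorProduct.mk K M N v) := by
        rw [Submodule.span_le]
        rintro w' ⟨mu, hmu⟩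
        show v ⊗ₜ[K] w' ∈ Submodule.span K {T : M ⊗[K] N | ∃ lam : K, bigG A D T = lam • T}
        apply Submodule.subset_span
        refine ⟨mu, ?_⟩
        rw [bigG_tmul, hv, TensorProduct.zero_tmul, zero_add, hmu,
          TensorProduct.tmul_smul]
      exact hcomap hw
  rw [hmain]

lemma eigvec_mem_fSub {L : Module.End K (M ⊗[K] N)} {T : M ⊗[K] N} {lam : K}
    (hT : L T = lam • T) : T ∈ fSub L := by
  have hle : Submodule.span K (Set.range fun n : ℕ => (L ^ n) T)
      ≤ Submodule.span K ({T} : Set (M ⊗[K] N)) := by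
    rw [Submodule.span_le]
    rintro y ⟨n, rfl⟩
    show (L ^ n) T ∈ _
    rw [pow_eigvec hT n]
    exact Submodule.smul_mem _ _ (Submodule.subset_span rfl)
  haveI : FiniteDimensional K (Submodule.span K ({T} : Set (M ⊗[K] N))) :=
    FiniteDimensional.span_of_finite K (Set.finite_singleton T)
  exact Submodule.finiteDimensional_of_le hle

lemma bigG_pow_tmul_right {w : N} (hw : D w = 0) (v : M) (k : ℕ) :
    ((bigG A D) ^ k) (v ⊗ₜ[K] w) = ((A ^ k) v) ⊗ₜ[K] w := by
  induction k with
  | zero => simp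
  | succ k ih =>
    have h1 : ((bigG A D) ^ (k + 1)) (v ⊗ₜ[K] w)
        = bigG A D (((bigG A D) ^ k) (v ⊗ₜ[K] w)) := by rw [pow_succ']; rfl
    have h2 : (A ^ (k + 1)) v = A ((A ^ k) v) := by rw [pow_succ']; rfl
    rw [h1, ih, bigG_tmul, hw, TensorProduct.tmul_zero, add_zero, h2]

/-- Contraction against a dual functional on the right factor. -/
noncomputable def contrR (f : Module.Dual K N) : (M ⊗[K] N) →ₗ[K] M :=
  (TensorProduct.rid K M).toLinearMap ∘ₗ LinearMap.lTensor M f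

lemma contrR_tmul (f : Module.Dual K N) (v : M) (w : N) :
    contrR f (v ⊗ₜ[K] w) = f w • v := by
  simp [contrR]

omit [IsAlgClosed K] in
lemma exists_dual_one (K : Type*) [Field K] {N : Type*} [AddCommGroup N] [Module K N]
    {w : N} (hw : w ≠ 0) : ∃ f : Module.Dual K N, f w = 1 := by
  have h : ¬ ∀ φ : Module.Dual K N, φ w = 0 := by
    rw [Module.forall_dual_apply_eq_zero_iff]
    exact hw
  push_neg at h
  obtain ⟨φ, hφ⟩ := h
  exact ⟨(φ w)⁻¹ • φ, by simp [inv_mul_cancel₀ hφ]⟩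

/-- Main statement (5): Jordan type. -/
lemma main_J (hF1 : fSub A = nSub A) (hF2 : fSub D = eigSpan D)
    (e₁ : M) (he₁ : A e₁ = 0) (hone₁ : (∃ x : M, x ≠ 0) → e₁ ≠ 0)
    (e₂ : N) (he₂ : D e₂ = 0) (hone₂ : (∃ y : N, y ≠ 0) → e₂ ≠ 0) :
    ({x : M | A x = 0} ⊂ {x : M | ∃ m : ℕ, (A ^ m) x = 0} ∧
      {x : N | D x = 0}
          ⊂ ↑(Submodule.span K {x : N | ∃ mu : K, D x = mu • x})) →
      ({T : M ⊗[K] N | bigG A D T = 0}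
          ⊂ {T : M ⊗[K] N | ∃ m : ℕ, ((bigG A D) ^ m) T = 0} ∧
       {T : M ⊗[K] N | bigG A D T = 0}
          ⊂ ↑(Submodule.span K {T : M ⊗[K] N | ∃ lam : K,
              bigG A D T = lam • T}) ∧
       (Submodule.span K {T : M ⊗[K] N | ∃ lam : K,
            bigG A D T = lam • T} : Set (M ⊗[K] N))
          ⊂ {T : M ⊗[K] N | FiniteDimensional K
              ↥(Submodule.span K (Set.range fun n : ℕ =>
                ((bigG A D) ^ n) T))}) := by
  rintro ⟨hCN, hCD⟩
  obtain ⟨x₀, hx₀N, hx₀C⟩ := Set.exists_of_ssubset hCN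
  obtain ⟨y₀, hy₀D, hy₀C⟩ := Set.exists_of_ssubset hCD
  have hx₀ne : x₀ ≠ 0 := fun h => hx₀C (by simp [Set.mem_setOf_eq, h])
  have hy₀ne : y₀ ≠ 0 := fun h => hy₀C (by simp [Set.mem_setOf_eq, h])
  have he₁ne : e₁ ≠ 0 := hone₁ ⟨x₀, hx₀ne⟩
  have he₂ne : e₂ ≠ 0 := hone₂ ⟨y₀, hy₀ne⟩
  -- an eigenvector with nonzero eigenvalue
  have hex : ∃ w₀ : N, (∃ mu₀ : K, D w₀ = mu₀ • w₀ ∧ mu₀ ≠ 0) ∧ w₀ ≠ 0 := by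
    by_contra hcon
    push_neg at hcon
    have hsub : {x : N | ∃ mu : K, D x = mu • x} ⊆ {x : N | D x = 0} := by
      rintro w ⟨mu, hmu⟩
      by_cases hw0 : w = 0
      · simp [Set.mem_setOf_eq, hw0]
      · by_cases hmu0 : mu = 0
        · show D w = 0
          rw [hmu, hmu0, zero_smul]
        · exact absurd hw0 (not_not.mpr (hcon w ⟨mu, hmu, hmu0⟩))
    have hle : Submodule.span K {x : N | ∃ mu : K, D x = mu • x}
        ≤ LinearMap.ker D := by
      rw [Submodule.span_le]
      intro w hw
      exact hsub hw
    exact hy₀C (hle hy₀D)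
  obtain ⟨w₀, ⟨mu₀, hw₀, hmu₀⟩, hw₀ne⟩ := hex
  obtain ⟨f₂, hf₂⟩ := exists_dual_one K hw₀ne
  obtain ⟨g₂, hg₂⟩ := exists_dual_one K he₂ne
  obtain ⟨m₀, hm₀⟩ := hx₀N
  have hAx₀ : A x₀ ≠ 0 := hx₀C
  refine ⟨?_, ?_, ?_⟩
  · -- C(Γ) ⊊ N(Γ)
    rw [Set.ssubset_def]
    constructor
    · intro T hT
      exact ⟨1, by rw [pow_one]; exact hT⟩
    · intro hcon
      have hmem : (x₀ ⊗ₜ[K] e₂) ∈ {T : M ⊗[K] N | ∃ m : ℕ, ((bigG A D) ^ m) T = 0} :=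
        ⟨m₀, by rw [bigG_pow_tmul_right A D he₂, hm₀, TensorProduct.zero_tmul]⟩
      have hnot := hcon hmem
      have hval : bigG A D (x₀ ⊗ₜ[K] e₂) = (A x₀) ⊗ₜ[K] e₂ := by
        rw [bigG_tmul, he₂, TensorProduct.tmul_zero, add_zero]
      have : (A x₀) ⊗ₜ[K] e₂ = 0 := by rw [← hval]; exact hnot
      apply hAx₀
      have := congrArg (contrR g₂) this
      rwa [contrR_tmul, hg₂, one_smul, map_zero] at this
  · -- C(Γ) ⊊ D(Γ)
    rw [Set.ssubset_def]
    constructor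
    · intro T hT
      exact Submodule.subset_span ⟨0, by rw [hT, zero_smul]⟩
    · intro hcon
      have heig : bigG A D (e₁ ⊗ₜ[K] w₀) = mu₀ • (e₁ ⊗ₜ[K] w₀) := by
        rw [bigG_tmul, he₁, TensorProduct.zero_tmul, zero_add, hw₀,
          TensorProduct.tmul_smul]
      have hmem : (e₁ ⊗ₜ[K] w₀) ∈ (Submodule.span K {T : M ⊗[K] N | ∃ lam : K,
          bigG A D T = lam • T} : Set (M ⊗[K] N)) :=
        Submodule.subset_span ⟨mu₀, heig⟩
      have hnot : bigG A D (e₁ ⊗ₜ[K] w₀) = 0 := hcon hmem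
      rw [heig] at hnot
      rcases smul_eq_zero.mp hnot with h | h
      · exact hmu₀ h
      · apply he₁ne
        have := congrArg (contrR f₂) h
        rwa [contrR_tmul, hf₂, one_smul, map_zero] at this
  · -- D(Γ) ⊊ F(Γ)
    rw [Set.ssubset_def]
    constructor
    · intro T hT
      have hle : Submodule.span K {T : M ⊗[K] N | ∃ lam : K, bigG A D T = lam • T}
          ≤ fSub (bigG A D) := by
        rw [Submodule.span_le]
        rintro T' ⟨lam, hT'⟩
        exact eigvec_mem_fSub hT'
      exact hle hT
    · intro hcon
      have hx₀F : x₀ ∈ fSub A := by rw [hF1]; exact ⟨m₀, hm₀⟩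
      have hw₀F : w₀ ∈ fSub D := eig_le_fSub D (Submodule.subset_span ⟨mu₀, hw₀⟩)
      have hmem : (x₀ ⊗ₜ[K] w₀) ∈ {T : M ⊗[K] N | FiniteDimensional K
          ↥(Submodule.span K (Set.range fun n : ℕ => ((bigG A D) ^ n) T))} :=
        tmul_mem_fSub A D hx₀F hw₀F
      have hnot := hcon hmem
      rw [main_D A D hF1 hF2] at hnot
      have hker : Submodule.span K {T : M ⊗[K] N | ∃ (v : M) (w : N),
          A v = 0 ∧
          w ∈ Submodule.span K {x : N | ∃ mu : K, D x = mu • x} ∧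
          T = v ⊗ₜ[K] w} ≤ (LinearMap.ker A).comap (contrR f₂) := by
        rw [Submodule.span_le]
        rintro t ⟨v, w, hv, hw, rfl⟩
        show contrR f₂ (v ⊗ₜ[K] w) ∈ LinearMap.ker A
        rw [LinearMap.mem_ker, contrR_tmul, map_smul, hv, smul_zero]
      have hval := hker hnot
      rw [Submodule.mem_comap, LinearMap.mem_ker, contrR_tmul, hf₂, one_smul] at hval
      exact hAx₀ hval

end Main

end Stmt19Aux

lemma pb_bracket_one {K P : Type*} [CommRing K] [Ring P] [Algebra K P]
    (B : PoissonBracket K P) (x : P) : B.bracket x 1 = 0 := by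
  have h := B.leibniz x 1 1
  rw [mul_one, mul_one, one_mul] at h
  exact (left_eq_add.mp h)

lemma pb_one_bracket {K P : Type*} [CommRing K] [Ring P] [Algebra K P]
    (B : PoissonBracket K P) (x : P) : B.bracket 1 x = 0 := by
  rw [B.antisymm, pb_bracket_one, neg_zero]

/-- If `F(z₁) = N(z₁)` and `F(z₂) = D(z₂)`, then for `Γ = z₁⊗1 + 1⊗z₂`:
`F(Γ) = N(z₁)⊗D(z₂)`, `N(Γ) = N(z₁)⊗C(z₂)`, `D(Γ) = C(z₁)⊗D(z₂)`,
`C(Γ) = C(z₁)⊗C(z₂)`; and if `C(z₁) ⊊ N(z₁)` and `C(z₂) ⊊ D(z₂)` then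
`C(Γ) ⊊ N(Γ)`, `C(Γ) ⊊ D(Γ)`, `D(Γ) ⊊ F(Γ)` (Jordan type). -/
theorem stmt_19 {K P₁ P₂ : Type*} [Field K] [CharZero K] [IsAlgClosed K]
    [Ring P₁] [Algebra K P₁] [Ring P₂] [Algebra K P₂]
    (B₁ : PoissonBracket K P₁) (B₂ : PoissonBracket K P₂)
    (B : PoissonBracket K (P₁ ⊗[K] P₂))
    (hB : ∀ (a₁ b₁ : P₁) (a₂ b₂ : P₂),
      B.bracket (a₁ ⊗ₜ[K] a₂) (b₁ ⊗ₜ[K] b₂)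
        = (b₁ * a₁) ⊗ₜ[K] B₂.bracket a₂ b₂ + B₁.bracket a₁ b₁ ⊗ₜ[K] (a₂ * b₂))
    (u₁ : DegreeMap K P₁ B₁) (u₂ : DegreeMap K P₂ B₂)
    (z₁ : P₁) (z₂ : P₂)
    (hF₁ : {x : P₁ | FiniteDimensional K
          ↥(Submodule.span K (Set.range fun n : ℕ => (B₁.bracket z₁ ^ n) x))}
        = {x : P₁ | ∃ m : ℕ, (B₁.bracket z₁ ^ m) x = 0})
    (hF₂ : {x : P₂ | FiniteDimensional K
          ↥(Submodule.span K (Set.range fun n : ℕ => (B₂.bracket z₂ ^ n) x))}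
        = ↑(Submodule.span K {x : P₂ | ∃ mu : K, B₂.bracket z₂ x = mu • x})) :
    ({T : P₁ ⊗[K] P₂ | FiniteDimensional K
          ↥(Submodule.span K (Set.range fun n : ℕ =>
            (B.bracket (z₁ ⊗ₜ[K] 1 + 1 ⊗ₜ[K] z₂) ^ n) T))}
        = ↑(Submodule.span K {T : P₁ ⊗[K] P₂ | ∃ (v : P₁) (w : P₂),
            (∃ m : ℕ, (B₁.bracket z₁ ^ m) v = 0) ∧
            w ∈ Submodule.span K {x : P₂ | ∃ mu : K, B₂.bracket z₂ x = mu • x} ∧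
            T = v ⊗ₜ[K] w})) ∧
    ({T : P₁ ⊗[K] P₂ | ∃ m : ℕ, (B.bracket (z₁ ⊗ₜ[K] 1 + 1 ⊗ₜ[K] z₂) ^ m) T = 0}
        = ↑(Submodule.span K {T : P₁ ⊗[K] P₂ | ∃ (v : P₁) (w : P₂),
            (∃ m : ℕ, (B₁.bracket z₁ ^ m) v = 0) ∧
            B₂.bracket z₂ w = 0 ∧ T = v ⊗ₜ[K] w})) ∧
    ((Submodule.span K {T : P₁ ⊗[K] P₂ | ∃ lam : K,
          B.bracket (z₁ ⊗ₜ[K] 1 + 1 ⊗ₜ[K] z₂) T = lam • T} : Set (P₁ ⊗[K] P₂))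
        = ↑(Submodule.span K {T : P₁ ⊗[K] P₂ | ∃ (v : P₁) (w : P₂),
            B₁.bracket z₁ v = 0 ∧
            w ∈ Submodule.span K {x : P₂ | ∃ mu : K, B₂.bracket z₂ x = mu • x} ∧
            T = v ⊗ₜ[K] w})) ∧
    ({T : P₁ ⊗[K] P₂ | B.bracket (z₁ ⊗ₜ[K] 1 + 1 ⊗ₜ[K] z₂) T = 0}
        = ↑(Submodule.span K {T : P₁ ⊗[K] P₂ | ∃ (v : P₁) (w : P₂),
            B₁.bracket z₁ v = 0 ∧ B₂.bracket z₂ w = 0 ∧ T = v ⊗ₜ[K] w})) ∧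
    (({x : P₁ | B₁.bracket z₁ x = 0} ⊂ {x : P₁ | ∃ m : ℕ, (B₁.bracket z₁ ^ m) x = 0} ∧
      {x : P₂ | B₂.bracket z₂ x = 0}
          ⊂ ↑(Submodule.span K {x : P₂ | ∃ mu : K, B₂.bracket z₂ x = mu • x})) →
      ({T : P₁ ⊗[K] P₂ | B.bracket (z₁ ⊗ₜ[K] 1 + 1 ⊗ₜ[K] z₂) T = 0}
          ⊂ {T : P₁ ⊗[K] P₂ | ∃ m : ℕ,
              (B.bracket (z₁ ⊗ₜ[K] 1 + 1 ⊗ₜ[K] z₂) ^ m) T = 0} ∧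
       {T : P₁ ⊗[K] P₂ | B.bracket (z₁ ⊗ₜ[K] 1 + 1 ⊗ₜ[K] z₂) T = 0}
          ⊂ ↑(Submodule.span K {T : P₁ ⊗[K] P₂ | ∃ lam : K,
              B.bracket (z₁ ⊗ₜ[K] 1 + 1 ⊗ₜ[K] z₂) T = lam • T}) ∧
       (Submodule.span K {T : P₁ ⊗[K] P₂ | ∃ lam : K,
            B.bracket (z₁ ⊗ₜ[K] 1 + 1 ⊗ₜ[K] z₂) T = lam • T} : Set (P₁ ⊗[K] P₂))
          ⊂ {T : P₁ ⊗[K] P₂ | FiniteDimensional K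
              ↥(Submodule.span K (Set.range fun n : ℕ =>
                (B.bracket (z₁ ⊗ₜ[K] 1 + 1 ⊗ₜ[K] z₂) ^ n) T))})) := by
  classical
  set A : Module.End K P₁ := B₁.bracket z₁ with hA
  set D : Module.End K P₂ := B₂.bracket z₂ with hD
  have hG : B.bracket (z₁ ⊗ₜ[K] 1 + 1 ⊗ₜ[K] z₂) = Stmt19Aux.bigG A D := by
    apply TensorProduct.ext'
    intro v w
    have hadd : B.bracket (z₁ ⊗ₜ[K] 1 + 1 ⊗ₜ[K] z₂) (v ⊗ₜ[K] w)
        = B.bracket (z₁ ⊗ₜ[K] (1 : P₂)) (v ⊗ₜ[K] w)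
          + B.bracket ((1 : P₁) ⊗ₜ[K] z₂) (v ⊗ₜ[K] w) := by
      rw [map_add B.bracket]
      rfl
    rw [hadd, hB z₁ v 1 w, hB 1 v z₂ w, pb_one_bracket B₂, pb_one_bracket B₁,
      Stmt19Aux.bigG_tmul, TensorProduct.tmul_zero, TensorProduct.zero_tmul,
      one_mul, mul_one, zero_add, add_zero]
  have hF1 : Stmt19Aux.fSub A = Stmt19Aux.nSub A := SetLike.coe_injective hF₁
  have hF2 : Stmt19Aux.fSub D = Stmt19Aux.eigSpan D := SetLike.coe_injective hF₂
  rw [hG]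
  have hone₁ : (∃ x : P₁, x ≠ 0) → (1 : P₁) ≠ 0 := by
    rintro ⟨x, hx⟩
    haveI := nontrivial_of_ne x 0 hx
    exact one_ne_zero
  have hone₂ : (∃ y : P₂, y ≠ 0) → (1 : P₂) ≠ 0 := by
    rintro ⟨y, hy⟩
    haveI := nontrivial_of_ne y 0 hy
    exact one_ne_zero
  exact ⟨Stmt19Aux.main_F A D hF1 hF2, Stmt19Aux.main_N A D hF1 hF2,
    Stmt19Aux.main_D A D hF1 hF2, Stmt19Aux.main_C A D hF1 hF2,
    Stmt19Aux.main_J A D hF1 hF2 1 (pb_bracket_one B₁ z₁) hone₁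
      1 (pb_bracket_one B₂ z₂) hone₂⟩
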